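/- arXiv:1505.05200 — 5 statements merged into one kernel-verified Lean document; each statement's English description precedes it below -/
import Mathlib

section
/- The labelled density of R_5 in R_{2n+1} tends to 1/384 as n → ∞; equivalently, the unlabelled density p(R_5; R_{2n+1}) tends to 1/16. -/
def IsTournament {V : Type*} (r : V → V → Prop) : Prop :=
  (∀ v, ¬ r v v) ∧ (∀ v w : V, v ≠ w → (r v w ↔ ¬ r w v))

def carousel (n : ℕ) (v w : ZMod (2*n+1)) : Prop :=
  ∃ i : ℕ, 1 ≤ i ∧ i ≤ n ∧ w = v + (i : ZMod (2*n+1))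

noncomputable def numEmb (n : ℕ) : ℕ :=
  Nat.card {f : ZMod (2*2+1) → ZMod (2*n+1) //
    Function.Injective f ∧ ∀ v w, carousel 2 v w → carousel n (f v) (f w)}

/-- Labelled density of $R_5$ in $R_{2n+1}$: fraction of injections that are embeddings. -/
noncomputable def tindR5 (n : ℕ) : ℝ :=
  (numEmb n : ℝ) / (Nat.descFactorial (2*n+1) 5)

/-!
An embedding `f` of `R₅` into `R_{2n+1}` is determined by `f 0` and the offsets
`x v = f v - f 0 ∈ {0, …, 2n}`; it is an embedding iff
`1 ≤ x₁ < x₂ ≤ n < x₃ ≤ x₁ + n < x₄ ≤ x₂ + n` (injectivity is automatic, both being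
tournaments). The shear `(x₃ - n - 1, x₁, x₄ - n, x₂ + 1)` turns these constraints into a
strictly increasing 4-tuple in `{0, …, n + 1}`, so there are `(2n+1) · C(n+2, 4)` embeddings,
and for `n ≥ 2`, `t_ind(R₅; R_{2n+1}) = (n+2)(n+1) / (96 (2n-1)(2n-3)) → 1/384`.
-/

theorem carousel_iff_val (n : ℕ) (a b : ZMod (2*n+1)) :
    carousel n a b ↔ 1 ≤ (b - a).val ∧ (b - a).val ≤ n := by
  constructor
  · rintro ⟨i, h1, h2, rfl⟩
    rw [add_sub_cancel_left, ZMod.val_cast_of_lt (by omega)]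
    exact ⟨h1, h2⟩
  · rintro ⟨h1, h2⟩
    exact ⟨(b - a).val, h1, h2, by rw [ZMod.natCast_zmod_val, add_sub_cancel]⟩

theorem isTournament_carousel (n : ℕ) : IsTournament (carousel n) := by
  refine ⟨fun v => by simp [carousel_iff_val], fun v w hvw => ?_⟩
  have : NeZero (w - v) := ⟨sub_ne_zero.2 hvw.symm⟩
  have hlt := ZMod.val_lt (w - v)
  have hpos := (ZMod.val_pos (a := w - v)).2 this.out
  rw [carousel_iff_val, carousel_iff_val, ← neg_sub w v, ZMod.val_neg_of_ne_zero]
  omega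

theorem IsTournament.injective_of_map_rel {α β : Type*} {r : α → α → Prop} {s : β → β → Prop}
    (hr : IsTournament r) (hs : IsTournament s) {f : α → β}
    (hf : ∀ v w, r v w → s (f v) (f w)) : Function.Injective f := by
  intro v w hvw
  by_contra hne
  by_cases h : r v w
  · exact hs.1 (f w) (hvw ▸ hf v w h)
  · have := hr.2 v w hne
    exact hs.1 (f v) (hvw ▸ hf w v (by tauto))

theorem carousel_two_iff (v w : ZMod (2*2+1)) :
    carousel 2 v w ↔
      (v, w) ∈ [(0, 1), (0, 2), (1, 2), (1, 3), (2, 3), (2, 4), (3, 4), (3, 0), (4, 0), (4, 1)] := by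
  rw [carousel_iff_val]
  revert v w
  decide

theorem forall_carousel_two_iff (P : ZMod (2*2+1) → ZMod (2*2+1) → Prop) :
    (∀ v w, carousel 2 v w → P v w) ↔
      P 0 1 ∧ P 0 2 ∧ P 1 2 ∧ P 1 3 ∧ P 2 3 ∧ P 2 4 ∧ P 3 4 ∧ P 3 0 ∧ P 4 0 ∧ P 4 1 := by
  simp [carousel_two_iff, or_imp, forall_and]

theorem carousel_add_natCast_iff {n x y : ℕ} (t : ZMod (2*n+1)) (hx : x < 2*n+1)
    (hy : y < 2*n+1) : carousel n (t + x) (t + y) ↔ x < y ∧ y ≤ x + n ∨ y + n < x := by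
  rw [carousel_iff_val, add_sub_add_left_eq_sub]
  rcases le_or_gt x y with hxy | hxy
  · rw [← Nat.cast_sub hxy, ZMod.val_cast_of_lt (by omega)]
    omega
  · have : ((y : ZMod (2*n+1)) - x) = ((y + (2*n+1) - x : ℕ) : ZMod (2*n+1)) := by
      rw [Nat.cast_sub (by omega), Nat.cast_add, ZMod.natCast_self, add_zero]
    rw [this, ZMod.val_cast_of_lt (by omega)]
    omega

section Offsets

variable {n : ℕ}

def IsR5Offsets (n : ℕ) (x : ZMod (2*2+1) → ℕ) : Prop :=
  x 0 = 0 ∧ 1 ≤ x 1 ∧ x 1 < x 2 ∧ x 2 ≤ n ∧ n < x 3 ∧ x 3 ≤ x 1 + n ∧ x 1 + n < x 4 ∧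
    x 4 ≤ x 2 + n

theorem IsR5Offsets.lt {x : ZMod (2*2+1) → ℕ} (hx : IsR5Offsets n x) (v : ZMod (2*2+1)) :
    x v < 2*n+1 := by
  simp only [IsR5Offsets] at hx
  fin_cases v <;> simp <;> omega

theorem map_carousel_two_add_iff (t : ZMod (2*n+1)) {x : ZMod (2*2+1) → ℕ} (hx0 : x 0 = 0)
    (hx : ∀ v, x v < 2*n+1) :
    (∀ v w, carousel 2 v w → carousel n (t + x v) (t + x w)) ↔ IsR5Offsets n x := by
  simp only [forall_carousel_two_iff, carousel_add_natCast_iff t (hx _) (hx _), IsR5Offsets]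
  have := hx 3
  have := hx 4
  omega

theorem isR5Offsets_val_sub {f : ZMod (2*2+1) → ZMod (2*n+1)}
    (hf : ∀ v w, carousel 2 v w → carousel n (f v) (f w)) :
    IsR5Offsets n (fun v => (f v - f 0).val) := by
  rw [← map_carousel_two_add_iff (f 0) (by simp) (fun v => ZMod.val_lt _)]
  simpa only [ZMod.natCast_zmod_val, add_sub_cancel] using hf

def chainOfOffsets (x : ZMod (2*2+1) → ℕ) (hx : IsR5Offsets n x) : Fin 4 ↪o Fin (n+2) :=
  OrderEmbedding.ofStrictMono
    (fun i => ⟨![x 3 - (n+1), x 1, x 4 - n, x 2 + 1] i, by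
      simp only [IsR5Offsets] at hx
      fin_cases i <;> simp <;> omega⟩)
    (by
      rw [Fin.strictMono_iff_lt_succ]
      simp only [IsR5Offsets] at hx
      intro i
      fin_cases i <;> simp [Fin.lt_def] <;> omega)

def offsetsOfChain (c : Fin 4 ↪o Fin (n+2)) : ZMod (2*2+1) → ℕ :=
  ![0, c 1, c 3 - 1, c 0 + n + 1, c 2 + n]

theorem isR5Offsets_offsetsOfChain (c : Fin 4 ↪o Fin (n+2)) :
    IsR5Offsets n (offsetsOfChain c) := by
  have h01 : c 0 < c 1 := c.strictMono (by decide)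
  have h12 : c 1 < c 2 := c.strictMono (by decide)
  have h23 : c 2 < c 3 := c.strictMono (by decide)
  have h3 := (c 3).isLt
  simp only [Fin.lt_def] at h01 h12 h23
  simp only [IsR5Offsets, offsetsOfChain, Matrix.cons_val, true_and]
  omega

theorem offsetsOfChain_chainOfOffsets {x : ZMod (2*2+1) → ℕ} (hx : IsR5Offsets n x) :
    offsetsOfChain (chainOfOffsets x hx) = x := by
  simp only [IsR5Offsets] at hx
  funext v
  fin_cases v <;> simp [offsetsOfChain, chainOfOffsets] <;> omega

theorem chainOfOffsets_offsetsOfChain (c : Fin 4 ↪o Fin (n+2)) {x : ZMod (2*2+1) → ℕ}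
    (hx : IsR5Offsets n x) (hxc : x = offsetsOfChain c) : chainOfOffsets x hx = c := by
  subst hxc
  have h03 : c 0 < c 3 := c.strictMono (by decide)
  rw [Fin.lt_def] at h03
  ext i
  fin_cases i <;> simp [offsetsOfChain, chainOfOffsets]
  omega

end Offsets

def carouselTwoHomEquiv (n : ℕ) :
    {f : ZMod (2*2+1) → ZMod (2*n+1) // ∀ v w, carousel 2 v w → carousel n (f v) (f w)} ≃
      ZMod (2*n+1) × (Fin 4 ↪o Fin (n+2)) where
  toFun f := (f.1 0, chainOfOffsets _ (isR5Offsets_val_sub f.2))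
  invFun p := ⟨fun v => p.1 + offsetsOfChain p.2 v,
    (map_carousel_two_add_iff p.1 (isR5Offsets_offsetsOfChain p.2).1
      (isR5Offsets_offsetsOfChain p.2).lt).2 (isR5Offsets_offsetsOfChain p.2)⟩
  left_inv f := by
    ext v
    simp [offsetsOfChain_chainOfOffsets]
  right_inv := by
    rintro ⟨t, c⟩
    have hc := isR5Offsets_offsetsOfChain c
    dsimp only
    simp only [hc.1, Nat.cast_zero, add_zero, add_sub_cancel_left, Prod.mk.injEq, true_and]
    exact chainOfOffsets_offsetsOfChain c _ (funext fun v => ZMod.val_cast_of_lt (hc.lt v))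

theorem numEmb_eq (n : ℕ) : numEmb n = (2*n+1) * (n+2).choose 4 := by
  have hinj (f : ZMod (2*2+1) → ZMod (2*n+1))
      (hf : ∀ v w, carousel 2 v w → carousel n (f v) (f w)) : Function.Injective f :=
    (isTournament_carousel 2).injective_of_map_rel (isTournament_carousel n) hf
  rw [numEmb, Nat.card_congr ((Equiv.subtypeEquivRight fun f =>
      and_iff_right_of_imp (hinj f)).trans (carouselTwoHomEquiv n)),
    Nat.card_prod, Nat.card_zmod, Nat.card_congr Set.powersetCard.ofFinEmbEquiv,
    Set.powersetCard.card, Nat.card_fin]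

theorem tindR5_add_two (m : ℕ) :
    tindR5 (m + 2) = (m + 4) * (m + 3) / (96 * ((2 * m + 3) * (2 * m + 1))) := by
  have hchoose : ((m + 4).choose 4 : ℝ) = (m + 1).ascFactorial 4 / 24 := by
    rw [← Nat.add_descFactorial_eq_ascFactorial, Nat.descFactorial_eq_factorial_mul_choose]
    norm_num [Nat.factorial]
  have hdesc : (2 * (m + 2) + 1).descFactorial 5 = (2 * m + 1).ascFactorial 5 := by
    rw [show 2 * (m + 2) + 1 = 2 * m + 5 by ring, Nat.add_descFactorial_eq_ascFactorial]
  rw [tindR5, numEmb_eq, hdesc, Nat.cast_mul, hchoose]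
  simp only [Nat.ascFactorial_succ, Nat.ascFactorial_zero]
  push_cast
  field_simp
  ring

open Filter Topology in
theorem tendsto_tindR5 : Tendsto tindR5 atTop (𝓝 (1 / 384)) := by
  rw [← tendsto_add_atTop_iff_nat 2]
  have hcont : ContinuousAt
      (fun u : ℝ => (1 + 3 * u) * (1 + 2 * u) / (96 * ((2 + u) * (2 - u)))) 0 := by
    fun_prop (disch := norm_num)
  have hlim := hcont.tendsto.comp tendsto_one_div_add_atTop_nhds_zero_nat
  norm_num at hlim
  refine hlim.congr fun m => ?_
  have hm : ((m : ℝ) + 1) * 2 - 1 ≠ 0 := by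
    rw [show ((m : ℝ) + 1) * 2 - 1 = 2 * m + 1 by ring]
    positivity
  rw [Function.comp_apply, tindR5_add_two]
  field_simp
  ring

/-- $t_{ind}(R_5;R_{2n+1}) \to 1/384$ and $p(R_5;R_{2n+1}) = 24\, t_{ind} \to 1/16$. -/
theorem stmt_1 :
    Filter.Tendsto tindR5 Filter.atTop (nhds (1/384)) ∧
    Filter.Tendsto (fun n => 24 * tindR5 n) Filter.atTop (nhds (1/16)) := by
  refine ⟨tendsto_tindR5, ?_⟩
  convert tendsto_tindR5.const_mul 24 using 2
  norm_num
end

section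
/- Let F(n) denote the number of embeddings of the tournament T_5^9 into the recursive blow-up Δ_{3^n} of the 3-cycle. Then F(1) = 0 and for every n ≥ 2, F(n) = 3·C(3^{n−1},2)^2·3^{n−1} + 3·F(n−1), where C(m,2)=m(m−1)/2. -/
/-- The recursive blow-up Δ_{3^n} of the 3-cycle, with vertex set the ternary strings
of length n: u beats v iff at the first differing coordinate i, v i = u i + 1 (mod 3). -/
def triBeats (n : ℕ) (u v : Fin n → Fin 3) : Prop :=
  ∃ i : Fin n, (∀ j, j < i → u j = v j) ∧ v i = u i + 1

/-- The tournament T_5^9 (arcs 1→2,2→3,3→4,4→5,5→1,1→3,2→4,3→5,1→4,5→2, zero-indexed). -/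
def t59 (v w : Fin 5) : Prop :=
  (v.val, w.val) ∈ [(0,1),(1,2),(2,3),(3,4),(4,0),(0,2),(1,3),(2,4),(0,3),(4,1)]

/-- F n = number of embeddings of T_5^9 into Δ_{3^n}. -/
noncomputable def numEmbT59 (n : ℕ) : ℕ :=
  Nat.card {f : Fin 5 → (Fin n → Fin 3) // Function.Injective f ∧
    ∀ v w, t59 v w → triBeats n (f v) (f w)}


lemma fin3_aux1 : ∀ a : Fin 3, ¬ a = a + 1 := by decide
lemma fin3_aux2 : ∀ a : Fin 3, ¬ a = a + 1 + 1 := by decide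
lemma fin3_aux3 : ∀ a b : Fin 3, a ≠ b → b = a + 1 ∨ a = b + 1 := by decide

instance (n : ℕ) (u v : Fin n → Fin 3) : Decidable (triBeats n u v) := by
  unfold triBeats; infer_instance

instance (v w : Fin 5) : Decidable (t59 v w) := by
  unfold t59; infer_instance

lemma triBeats_succ {m : ℕ} (u v : Fin (m+1) → Fin 3) :
    triBeats (m+1) u v ↔ v 0 = u 0 + 1 ∨ (u 0 = v 0 ∧ triBeats m (Fin.tail u) (Fin.tail v)) := by
  constructor
  · rintro ⟨i, hpre, hi⟩
    induction i using Fin.cases with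
    | zero => exact Or.inl hi
    | succ j =>
      refine Or.inr ⟨hpre 0 (Fin.succ_pos j), ⟨j, fun k hk => ?_, hi⟩⟩
      exact hpre k.succ (Fin.succ_lt_succ_iff.mpr hk)
  · rintro (h | ⟨h0, j, hpre, hj⟩)
    · exact ⟨0, fun j hj => absurd hj (Fin.not_lt_zero j), h⟩
    · refine ⟨j.succ, fun k hk => ?_, hj⟩
      induction k using Fin.cases with
      | zero => exact h0
      | succ k' => exact hpre k' (Fin.succ_lt_succ_iff.mp hk)

lemma triBeats_ne {n : ℕ} {u v : Fin n → Fin 3} (h : triBeats n u v) : u ≠ v := by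
  rintro rfl
  obtain ⟨i, -, hi⟩ := h
  exact fin3_aux1 (u i) hi

lemma triBeats_total {n : ℕ} {u v : Fin n → Fin 3} (h : u ≠ v) :
    triBeats n u v ∨ triBeats n v u := by
  induction n with
  | zero => exact absurd (funext fun i => i.elim0) h
  | succ m ih =>
    by_cases h0 : u 0 = v 0
    · have hne : Fin.tail u ≠ Fin.tail v := by
        intro ht
        apply h
        funext i
        induction i using Fin.cases with
        | zero => exact h0
        | succ j => exact congrFun ht j
      rcases ih hne with h' | h'
      · exact Or.inl ((triBeats_succ u v).mpr (Or.inr ⟨h0, h'⟩))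
      · exact Or.inr ((triBeats_succ v u).mpr (Or.inr ⟨h0.symm, h'⟩))
    · have : v 0 = u 0 + 1 ∨ u 0 = v 0 + 1 := by
        revert h0; generalize u 0 = a; generalize v 0 = b; intro h0; revert h0; revert a b; decide
      rcases this with h' | h'
      · exact Or.inl ((triBeats_succ u v).mpr (Or.inl h'))
      · exact Or.inr ((triBeats_succ v u).mpr (Or.inl h'))

lemma triBeats_asymm {n : ℕ} {u v : Fin n → Fin 3} (h1 : triBeats n u v) (h2 : triBeats n v u) :
    False := by
  induction n with
  | zero => obtain ⟨i, -⟩ := h1; exact i.elim0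
  | succ m ih =>
    rw [triBeats_succ] at h1 h2
    rcases h1 with h1 | ⟨e1, h1⟩ <;> rcases h2 with h2 | ⟨e2, h2⟩
    · rw [h1] at h2; exact fin3_aux2 (u 0) h2
    · rw [e2] at h1; exact fin3_aux1 (u 0) h1
    · rw [e1] at h2; exact fin3_aux1 (v 0) h2
    · exact ih h1 h2

lemma inj_of_arcs {n : ℕ} {f : Fin 5 → (Fin n → Fin 3)}
    (h : ∀ v w, t59 v w → triBeats n (f v) (f w)) : Function.Injective f := by
  intro a b hab
  by_contra hne
  have key : ∀ a b : Fin 5, a ≠ b → t59 a b ∨ t59 b a := by decide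
  rcases key a b hne with h' | h'
  · exact triBeats_ne (h a b h') hab
  · exact triBeats_ne (h b a h') hab.symm

def embSet (n : ℕ) : Finset (Fin 5 → (Fin n → Fin 3)) :=
  Finset.univ.filter fun f => ∀ v w, t59 v w → triBeats n (f v) (f w)

lemma numEmbT59_eq (n : ℕ) : numEmbT59 n = (embSet n).card := by
  rw [numEmbT59, Nat.card_eq_fintype_card, Fintype.card_subtype, embSet]
  congr 1
  ext f
  simp only [Finset.mem_filter, Finset.mem_univ, true_and, and_iff_right_iff_imp]
  exact inj_of_arcs

lemma card_triBeats_pairs (m : ℕ) :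
    (Finset.univ.filter fun p : (Fin m → Fin 3) × (Fin m → Fin 3) => triBeats m p.1 p.2).card
      = Nat.choose (3^m) 2 := by
  set A := Finset.univ.filter fun p : (Fin m → Fin 3) × (Fin m → Fin 3) => triBeats m p.1 p.2
    with hA
  set B := Finset.univ.filter fun p : (Fin m → Fin 3) × (Fin m → Fin 3) => triBeats m p.2 p.1
    with hB
  have hcard : A.card = B.card := by
    apply Finset.card_bij' (fun p _ => (p.2, p.1)) (fun p _ => (p.2, p.1)) <;>
      simp only [hA, hB, Finset.mem_filter, Finset.mem_univ, true_and] <;>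
      intros <;> first | assumption | rfl | trivial
  have hN : Fintype.card (Fin m → Fin 3) = 3 ^ m := by
    simp [Fintype.card_fun]
  have hunion : A ∪ B = (Finset.univ : Finset (Fin m → Fin 3)).offDiag := by
    ext p
    simp only [hA, hB, Finset.mem_union, Finset.mem_filter, Finset.mem_univ, true_and,
      Finset.mem_offDiag]
    constructor
    · rintro (h | h) <;> intro e
      · exact triBeats_ne h e
      · exact triBeats_ne h e.symm
    · intro h
      exact triBeats_total h
  have hdisj : Disjoint A B := by
    rw [Finset.disjoint_left]
    intro p hp hq
    simp only [hA, hB, Finset.mem_filter, Finset.mem_univ, true_and] at hp hq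
    exact triBeats_asymm hp hq
  have h2 : A.card + B.card = 3^m * 3^m - 3^m := by
    rw [← Finset.card_union_of_disjoint hdisj, hunion, Finset.offDiag_card]
    simp only [Finset.card_univ, hN]
  rw [← hcard] at h2
  rw [Nat.choose_two_right]
  have : 3^m * (3^m - 1) = 3^m * 3^m - 3^m := by
    rw [Nat.mul_sub_one]
  rw [this]
  omega

def cpi (c : Fin 3) : Fin 5 → Fin 3 := fun _ => c
def xpi (i : Fin 3) : Fin 5 → Fin 3 := ![i, i, i+1, i+1, i+2]

def validPis : Finset (Fin 5 → Fin 3) :=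
  {cpi 0, cpi 1, cpi 2, xpi 0, xpi 1, xpi 2}

set_option maxRecDepth 4000 in
lemma mem_validPis : ∀ π : Fin 5 → Fin 3,
    (∀ v w, t59 v w → π w = π v + 1 ∨ π v = π w) → π ∈ validPis := by decide

lemma const_fiber (m : ℕ) (c : Fin 3) :
    ((embSet (m+1)).filter fun f => (fun v => f v 0) = cpi c).card = (embSet m).card := by
  apply Finset.card_bij' (fun f _ => fun v => Fin.tail (f v))
    (fun g _ => fun v => Fin.cons c (g v))
  case hi =>
    intro f hf
    simp only [Finset.mem_filter, embSet, Finset.mem_univ, true_and] at hf ⊢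
    obtain ⟨harcs, hcoord⟩ := hf
    intro v w hvw
    have h := (triBeats_succ _ _).mp (harcs v w hvw)
    have hv : f v 0 = c := congrFun hcoord v
    have hw : f w 0 = c := congrFun hcoord w
    rcases h with h | ⟨-, h⟩
    · rw [hv, hw] at h; exact absurd h (fin3_aux1 c)
    · exact h
  case hj =>
    intro g hg
    simp only [Finset.mem_filter, embSet, Finset.mem_univ, true_and] at hg ⊢
    constructor
    · intro v w hvw
      refine (triBeats_succ _ _).mpr (Or.inr ⟨by simp, ?_⟩)
      simpa [Fin.tail_cons] using hg v w hvw
    · funext v; simp [cpi]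
  case left_inv =>
    intro f hf
    simp only [Finset.mem_filter] at hf
    funext v
    have hv : f v 0 = c := congrFun hf.2 v
    rw [← hv]
    exact Fin.cons_self_tail (f v)
  case right_inv =>
    intro g _
    funext v
    simp [Fin.tail_cons]

lemma fin3_c2 : ∀ i : Fin 3, i + 2 = i + 1 + 1 := by decide
lemma fin3_c3 : ∀ i : Fin 3, i = i + 2 + 1 := by decide

lemma cross_fiber (m : ℕ) (i : Fin 3) :
    ((embSet (m+1)).filter fun f => (fun v => f v 0) = xpi i).card
      = Nat.choose (3^m) 2 ^ 2 * 3 ^ m := by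
  classical
  set P := Finset.univ.filter
      (fun p : (Fin m → Fin 3) × (Fin m → Fin 3) => triBeats m p.1 p.2) with hPdef
  have key : ((embSet (m+1)).filter fun f => (fun v => f v 0) = xpi i).card
      = ((P ×ˢ P) ×ˢ (Finset.univ : Finset (Fin m → Fin 3))).card := by
    apply Finset.card_bij'
      (fun f _ => (((Fin.tail (f 0), Fin.tail (f 1)), (Fin.tail (f 2), Fin.tail (f 3))),
        Fin.tail (f 4)))
      (fun q _ => fun v => Fin.cons (xpi i v) (![q.1.1.1, q.1.1.2, q.1.2.1, q.1.2.2, q.2] v))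
    case hi =>
      intro f hf
      simp only [Finset.mem_filter, embSet, Finset.mem_univ, true_and] at hf
      obtain ⟨harcs, hcoord⟩ := hf
      have hc : ∀ v, f v 0 = xpi i v := fun v => congrFun hcoord v
      have h01 : triBeats m (Fin.tail (f 0)) (Fin.tail (f 1)) := by
        rcases (triBeats_succ _ _).mp (harcs 0 1 (by decide)) with h | ⟨-, h⟩
        · rw [hc 0, hc 1] at h; exact absurd h (fin3_aux1 i)
        · exact h
      have h23 : triBeats m (Fin.tail (f 2)) (Fin.tail (f 3)) := by
        rcases (triBeats_succ _ _).mp (harcs 2 3 (by decide)) with h | ⟨-, h⟩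
        · rw [hc 2, hc 3] at h; exact absurd h (fin3_aux1 (i+1))
        · exact h
      simp only [Finset.mem_product, hPdef, Finset.mem_filter, Finset.mem_univ, true_and]
      exact ⟨⟨h01, h23⟩, trivial⟩
    case hj =>
      intro q hq
      simp only [Finset.mem_product, hPdef, Finset.mem_filter, Finset.mem_univ, true_and] at hq
      simp only [Finset.mem_filter, embSet, Finset.mem_univ, true_and]
      constructor
      · intro v w hvw
        rw [triBeats_succ]
        simp only [Fin.cons_zero, Fin.tail_cons]
        fin_cases v <;> fin_cases w <;> simp only [t59, List.mem_cons] at hvw ⊢ <;>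
          (try exact absurd hvw (by decide)) <;> (try exact Or.inl rfl) <;> (try exact Or.inl (fin3_c2 i)) <;>
          (try exact Or.inl (fin3_c3 i)) <;> (try exact Or.inr ⟨rfl, hq.1.1⟩) <;>
          (try exact Or.inr ⟨rfl, hq.1.2⟩)
      · funext v; exact Fin.cons_zero _ _
    case left_inv =>
      intro f hf
      simp only [Finset.mem_filter] at hf
      funext v k
      induction k using Fin.cases with
      | zero => exact (congrFun hf.2 v).symm
      | succ k' =>
        fin_cases v <;> rfl
    case right_inv =>
      intro q hq
      rfl
  rw [key, Finset.card_product, Finset.card_product, card_triBeats_pairs, Finset.card_univ]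
  have hN : Fintype.card (Fin m → Fin 3) = 3 ^ m := by simp [Fintype.card_fun]
  rw [hN]
  ring

lemma rec_step (m : ℕ) :
    numEmbT59 (m+1) = 3 * (Nat.choose (3^m) 2)^2 * 3^m + 3 * numEmbT59 m := by
  classical
  rw [numEmbT59_eq, numEmbT59_eq]
  have hmem : ∀ f ∈ embSet (m+1), (fun v => f v 0) ∈ validPis := by
    intro f hf
    simp only [embSet, Finset.mem_filter, Finset.mem_univ, true_and] at hf
    apply mem_validPis
    intro v w hvw
    rcases (triBeats_succ _ _).mp (hf v w hvw) with h | ⟨h, -⟩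
    · exact Or.inl h
    · exact Or.inr h
  rw [Finset.card_eq_sum_card_fiberwise hmem]
  rw [show validPis = {cpi 0, cpi 1, cpi 2, xpi 0, xpi 1, xpi 2} from rfl]
  rw [Finset.sum_insert (by decide), Finset.sum_insert (by decide),
    Finset.sum_insert (by decide), Finset.sum_insert (by decide),
    Finset.sum_insert (by decide), Finset.sum_singleton]
  rw [const_fiber, const_fiber, const_fiber, cross_fiber, cross_fiber, cross_fiber]
  ring

lemma base_case : numEmbT59 1 = 0 := by
  rw [numEmbT59]
  have : IsEmpty {f : Fin 5 → (Fin 1 → Fin 3) // Function.Injective f ∧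
      ∀ v w, t59 v w → triBeats 1 (f v) (f w)} := by
    constructor
    rintro ⟨f, hinj, -⟩
    have h := Fintype.card_le_of_injective f hinj
    simp [Fintype.card_fun] at h
  exact Nat.card_of_isEmpty


/-- F(1)=0 and F(n) = 3·C(3^{n-1},2)²·3^{n-1} + 3·F(n-1) for n ≥ 2. -/
theorem stmt_3 :
    numEmbT59 1 = 0 ∧ ∀ n : ℕ, 2 ≤ n →
      numEmbT59 n =
        3 * (Nat.choose (3^(n-1)) 2)^2 * 3^(n-1) + 3 * numEmbT59 (n-1) := by
  refine ⟨base_case, fun n hn => ?_⟩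
  obtain ⟨m, rfl⟩ : ∃ m, n = m + 1 := ⟨n - 1, by omega⟩
  simpa using rec_step m
end

section
/- If F(1)=0 and F(n) = 3·C(3^{n−1},2)^2·3^{n−1} + 3·F(n−1) for n ≥ 2, then F(n) = 3^{5n}/320 + O(3^{4n}); in particular 120·F(n)/(3^n)_5 → 3/8 as n → ∞, where (m)_5 is the falling factorial m(m−1)(m−2)(m−3)(m−4). -/
/-- If F(1)=0 and F(n)=3·C(3^{n-1},2)²·3^{n-1}+3·F(n-1) for n ≥ 2, then
F(n) = 3^{5n}/320 + O(3^{4n}) and 5!·F(n)/(3^n)_5 → 3/8. -/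
theorem stmt_4 (F : ℕ → ℕ) (h1 : F 1 = 0)
    (hrec : ∀ n : ℕ, 2 ≤ n →
      F n = 3 * (Nat.choose (3^(n-1)) 2)^2 * 3^(n-1) + 3 * F (n-1)) :
    (∃ C : ℝ, ∀ n : ℕ, 1 ≤ n → |(F n : ℝ) - 3^(5*n) / 320| ≤ C * 3^(4*n)) ∧
    Filter.Tendsto (fun n : ℕ => (120 * F n : ℝ) / (Nat.descFactorial (3^n) 5))
      Filter.atTop (nhds (3/8)) := by
  -- closed form
  have hF : ∀ n : ℕ, 1 ≤ n → (F n : ℝ) * 4160 =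
      13 * 3^(5*n) - 80 * 3^(4*n) + 130 * 3^(3*n) - 63 * 3^n := by
    intro n hn
    induction n, hn using Nat.le_induction with
    | base => norm_num [h1]
    | succ n hn ih =>
      have hr := hrec (n+1) (by omega)
      simp only [Nat.add_sub_cancel] at hr
      have hc : ((Nat.choose (3^n) 2 : ℕ) : ℝ) = (3:ℝ)^n * ((3:ℝ)^n - 1) / 2 := by
        rw [Nat.cast_choose_two]; push_cast; ring
      have : (F (n+1) : ℝ) = 3 * ((3:ℝ)^n * ((3:ℝ)^n - 1) / 2)^2 * 3^n + 3 * F n := by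
        rw [hr]; push_cast [hc]; ring
      rw [show 5*(n+1) = n*5+5 by ring, show 4*(n+1) = n*4+4 by ring,
        show 3*(n+1) = n*3+3 by ring]
      rw [show (5*n : ℕ) = n*5 by ring, show (4*n : ℕ) = n*4 by ring,
        show (3*n : ℕ) = n*3 by ring] at ih
      rw [pow_mul, pow_mul, pow_mul] at ih
      rw [pow_add, pow_add, pow_add, pow_mul, pow_mul, pow_mul, pow_succ]
      linear_combination 4160 * this + 3 * ih
  constructor
  · refine ⟨1, fun n hn => ?_⟩
    have h := hF n hn
    have h3 : (0:ℝ) < 3 := by norm_num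
    have e1 : (3:ℝ)^(3*n) ≤ (3:ℝ)^(4*n) := by
      apply pow_le_pow_right₀ (by norm_num); omega
    have e2 : (3:ℝ)^n ≤ (3:ℝ)^(4*n) := by
      apply pow_le_pow_right₀ (by norm_num); omega
    have e3 : (0:ℝ) < (3:ℝ)^n := by positivity
    have e4 : (0:ℝ) < (3:ℝ)^(4*n) := by positivity
    have e5 : (0:ℝ) < (3:ℝ)^(3*n) := by positivity
    rw [abs_le]
    constructor <;> nlinarith
  · -- tendsto
    have hy : Filter.Tendsto (fun n : ℕ => ((1:ℝ)/3)^n) Filter.atTop (nhds 0) :=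
      tendsto_pow_atTop_nhds_zero_of_lt_one (by norm_num) (by norm_num)
    set num : ℝ → ℝ := fun y => 3/8 - (120/52)*y + (120/32)*y^2 - (63*120/4160)*y^4 with hnum
    set den : ℝ → ℝ := fun y => (1-y)*(1-2*y)*(1-3*y)*(1-4*y) with hden
    have hcn : Continuous num := by fun_prop
    have hcd : Continuous den := by fun_prop
    have hlim : Filter.Tendsto (fun n : ℕ => num (((1:ℝ)/3)^n) / den (((1:ℝ)/3)^n))
        Filter.atTop (nhds (3/8)) := by
      have h1 : Filter.Tendsto (fun n : ℕ => num (((1:ℝ)/3)^n)) Filter.atTop (nhds (num 0)) :=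
        (hcn.tendsto 0).comp hy
      have h2 : Filter.Tendsto (fun n : ℕ => den (((1:ℝ)/3)^n)) Filter.atTop (nhds (den 0)) :=
        (hcd.tendsto 0).comp hy
      have hn0 : num 0 = 3/8 := by simp [hnum]
      have hd0 : den 0 = 1 := by simp [hden]
      have hD := Filter.Tendsto.div h1 h2 (by rw [hd0]; norm_num)
      rw [hn0, hd0, div_one] at hD
      exact hD
    refine Filter.Tendsto.congr' ?_ hlim
    filter_upwards [Filter.eventually_ge_atTop 2] with n hn
    have hx9 : (9:ℕ) ≤ 3^n := by
      calc (9:ℕ) = 3^2 := by norm_num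
      _ ≤ 3^n := Nat.pow_le_pow_right (by norm_num) hn
    have hdesc : ((Nat.descFactorial (3^n) 5 : ℕ) : ℝ) =
        (3:ℝ)^n * ((3:ℝ)^n - 1) * ((3:ℝ)^n - 2) * ((3:ℝ)^n - 3) * ((3:ℝ)^n - 4) := by
      have : Nat.descFactorial (3^n) 5 = (3^n-4)*((3^n-3)*((3^n-2)*((3^n-1)*3^n))) := by
        simp [Nat.descFactorial]
      rw [this]
      push_cast [Nat.cast_sub (by omega : (4:ℕ) ≤ 3^n), Nat.cast_sub (by omega : (3:ℕ) ≤ 3^n),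
        Nat.cast_sub (by omega : (2:ℕ) ≤ 3^n), Nat.cast_sub (by omega : (1:ℕ) ≤ 3^n)]
      ring
    have hFn := hF n (by omega)
    have hx : (9:ℝ) ≤ (3:ℝ)^n := by
      calc (9:ℝ) = ((9:ℕ):ℝ) := by norm_num
      _ ≤ ((3^n : ℕ) : ℝ) := by exact_mod_cast hx9
      _ = (3:ℝ)^n := by push_cast; ring
    have hxne : (3:ℝ)^n ≠ 0 := by positivity
    have hy13 : ((1:ℝ)/3)^n = ((3:ℝ)^n)⁻¹ := by
      rw [div_pow, one_pow, one_div]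
    rw [hdesc, hy13]
    rw [show (5*n : ℕ) = n*5 by ring, show (4*n : ℕ) = n*4 by ring,
      show (3*n : ℕ) = n*3 by ring, pow_mul, pow_mul, pow_mul] at hFn
    have hFval : (F n : ℝ) =
        (13 * ((3:ℝ)^n)^5 - 80 * ((3:ℝ)^n)^4 + 130 * ((3:ℝ)^n)^3 - 63 * (3:ℝ)^n) / 4160 := by
      linarith
    have hA : num (((3:ℝ)^n)⁻¹) * ((3:ℝ)^n)^5 = 120 * (F n : ℝ) := by
      simp only [hnum]
      rw [hFval]
      field_simp
      ring
    have hB : den (((3:ℝ)^n)⁻¹) * ((3:ℝ)^n)^5 =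
        (3:ℝ)^n * ((3:ℝ)^n - 1) * ((3:ℝ)^n - 2) * ((3:ℝ)^n - 3) * ((3:ℝ)^n - 4) := by
      simp only [hden]
      field_simp
    rw [← hA, ← hB, mul_div_mul_right _ _ (pow_ne_zero 5 hxne)]
end

section
/- Every C3-decomposable tournament contains no copy of T_5^{12} (the 5-vertex carousel R_5), and the property of being C3-decomposable is hereditary: every induced subtournament of a C3-decomposable tournament is C3-decomposable. -/
/-- C3-decomposability of the subtournament of \`r\` induced on a finite vertex set \`s\`:
sets of size ≤ 1 are decomposable, and otherwise \`s\` splits into proper subsets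
A, B, C with A → B → C → A completely and each part decomposable. -/
inductive C3Dec {V : Type*} [DecidableEq V] (r : V → V → Prop) : Finset V → Prop
  | small : ∀ s : Finset V, s.card ≤ 1 → C3Dec r s
  | split : ∀ s A B C : Finset V, A ⊂ s → B ⊂ s → C ⊂ s →
      Disjoint A B → Disjoint B C → Disjoint A C →
      A ∪ B ∪ C = s →
      (∀ a ∈ A, ∀ b ∈ B, r a b) → (∀ b ∈ B, ∀ c ∈ C, r b c) →
      (∀ c ∈ C, ∀ a ∈ A, r c a) →
      C3Dec r A → C3Dec r B → C3Dec r C → C3Dec r s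

/-- \`r\` contains an induced copy of the pattern tournament \`pat\`. -/
def HasCopy {V : Type*} {k : ℕ} (r : V → V → Prop) (pat : Fin k → Fin k → Prop) : Prop :=
  ∃ f : Fin k → V, Function.Injective f ∧ ∀ v w, pat v w ↔ r (f v) (f w)

/-- T_5^12 = R_5. -/
def t512 (v w : Fin 5) : Prop :=
  (v.val, w.val) ∈ [(0,1),(1,2),(2,3),(3,4),(4,0),(0,2),(1,3),(2,4),(3,0),(4,1)]


instance (v w : Fin 5) : Decidable (t512 v w) := by unfold t512; infer_instance

lemma r5_no_split : ∀ g : Fin 5 → Fin 3,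
    (∀ i j, (g i = 0 ∧ g j = 1 ∨ g i = 1 ∧ g j = 2 ∨ g i = 2 ∧ g j = 0) → t512 i j) →
    ∃ c, ∀ i, g i = c := by
  set_option maxRecDepth 10000 in decide

lemma hered {V : Type*} [DecidableEq V] (r : V → V → Prop) {s : Finset V}
    (h : C3Dec r s) : ∀ t ⊆ s, C3Dec r t := by
  induction h with
  | small s hs =>
    intro t ht
    exact C3Dec.small t (le_trans (Finset.card_le_card ht) hs)
  | split s A B C hA hB hC dAB dBC dAC hun hAB hBC hCA _ _ _ ihA ihB ihC =>
    intro t ht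
    by_cases htA : t ⊆ A
    · exact ihA t htA
    by_cases htB : t ⊆ B
    · exact ihB t htB
    by_cases htC : t ⊆ C
    · exact ihC t htC
    refine C3Dec.split t (t ∩ A) (t ∩ B) (t ∩ C)
      ⟨Finset.inter_subset_left, fun hsub => htA fun x hx => (Finset.mem_inter.mp (hsub hx)).2⟩
      ⟨Finset.inter_subset_left, fun hsub => htB fun x hx => (Finset.mem_inter.mp (hsub hx)).2⟩
      ⟨Finset.inter_subset_left, fun hsub => htC fun x hx => (Finset.mem_inter.mp (hsub hx)).2⟩
      (dAB.mono Finset.inter_subset_right Finset.inter_subset_right)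
      (dBC.mono Finset.inter_subset_right Finset.inter_subset_right)
      (dAC.mono Finset.inter_subset_right Finset.inter_subset_right)
      ?_ ?_ ?_ ?_
      (ihA _ Finset.inter_subset_right) (ihB _ Finset.inter_subset_right)
      (ihC _ Finset.inter_subset_right)
    · rw [← Finset.inter_union_distrib_left, ← Finset.inter_union_distrib_left, hun]
      exact Finset.inter_eq_left.mpr ht
    · intro a ha b hb
      exact hAB a (Finset.mem_inter.mp ha).2 b (Finset.mem_inter.mp hb).2
    · intro a ha b hb
      exact hBC a (Finset.mem_inter.mp ha).2 b (Finset.mem_inter.mp hb).2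
    · intro a ha b hb
      exact hCA a (Finset.mem_inter.mp ha).2 b (Finset.mem_inter.mp hb).2

lemma nocopy {V : Type*} [DecidableEq V] (r : V → V → Prop) {s : Finset V}
    (h : C3Dec r s) : ∀ f : Fin 5 → V, Function.Injective f →
    (∀ v w, t512 v w ↔ r (f v) (f w)) → (∀ i, f i ∈ s) → False := by
  induction h with
  | small s hs =>
    intro f hinj hiso hmem
    have h5 : (Finset.univ.image f).card = 5 := by
      rw [Finset.card_image_of_injective _ hinj]; simp
    have hsub : Finset.univ.image f ⊆ s := by
      intro x hx
      obtain ⟨i, _, rfl⟩ := Finset.mem_image.mp hx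
      exact hmem i
    have := Finset.card_le_card hsub
    omega
  | split s A B C hA hB hC dAB dBC dAC hun hAB hBC hCA _ _ _ ihA ihB ihC =>
    intro f hinj hiso hmem
    set g : Fin 5 → Fin 3 := fun i => if f i ∈ A then 0 else if f i ∈ B then 1 else 2 with hgdef
    have hg : ∀ i, (g i = 0 → f i ∈ A) ∧ (g i = 1 → f i ∈ B) ∧ (g i = 2 → f i ∈ C) := by
      intro i
      have hi : f i ∈ A ∪ B ∪ C := hun ▸ hmem i
      rw [Finset.mem_union, Finset.mem_union] at hi
      by_cases h1 : f i ∈ A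
      · simp [hgdef, h1]
      · by_cases h2 : f i ∈ B
        · simp [hgdef, h1, h2]
        · have h3 : f i ∈ C := by tauto
          simp [hgdef, h1, h2, h3]
    have compat : ∀ i j, (g i = 0 ∧ g j = 1 ∨ g i = 1 ∧ g j = 2 ∨ g i = 2 ∧ g j = 0) →
        t512 i j := by
      rintro i j (⟨h1, h2⟩ | ⟨h1, h2⟩ | ⟨h1, h2⟩)
      · exact (hiso i j).mpr (hAB _ ((hg i).1 h1) _ ((hg j).2.1 h2))
      · exact (hiso i j).mpr (hBC _ ((hg i).2.1 h1) _ ((hg j).2.2 h2))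
      · exact (hiso i j).mpr (hCA _ ((hg i).2.2 h1) _ ((hg j).1 h2))
    obtain ⟨c, hc⟩ := r5_no_split g compat
    fin_cases c
    · exact ihA f hinj hiso fun i => (hg i).1 (hc i)
    · exact ihB f hinj hiso fun i => (hg i).2.1 (hc i)
    · exact ihC f hinj hiso fun i => (hg i).2.2 (hc i)

/-- A C3-decomposable tournament has no copy of T_5^12, and C3-decomposability
is hereditary under taking induced subtournaments. -/
theorem stmt_6 {V : Type*} [Fintype V] [DecidableEq V] (r : V → V → Prop)
    (hr : IsTournament r) :
    (C3Dec r Finset.univ → ¬ HasCopy r t512) ∧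
    (∀ s t : Finset V, C3Dec r s → t ⊆ s → C3Dec r t) := by
  constructor
  · rintro h ⟨f, hinj, hiso⟩
    exact nocopy r h f hinj hiso (fun i => Finset.mem_univ _)
  · intro s t hs ht
    exact hered r hs t ht
end

section
/- Let T be a tournament containing a 3-cycle a→b→c→a, with V_ab = {v : v→a, v→b, c→v} and V_c = {v : a→v, b→v, v→c} (and symmetric definitions). If T contains no copy of T_5^{12} (the carousel R_5), then every vertex of V_ab beats every vertex of V_c, every vertex of V_bc beats every vertex of V_a, and every vertex of V_ac beats every vertex of V_b. -/
lemma mk_copy {V : Type*} {r : V → V → Prop} (hr : IsTournament r)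
    (x0 x1 x2 x3 x4 : V)
    (a01 : r x0 x1) (a12 : r x1 x2) (a23 : r x2 x3) (a34 : r x3 x4) (a40 : r x4 x0)
    (a02 : r x0 x2) (a13 : r x1 x3) (a24 : r x2 x4) (a30 : r x3 x0) (a41 : r x4 x1) :
    HasCopy r t512 := by
  have ne : ∀ {p q : V}, r p q → p ≠ q := fun h heq => hr.1 _ (heq ▸ h)
  have nrev : ∀ {p q : V}, r p q → ¬ r q p := fun h h' => (hr.2 _ _ (ne h).symm).mp h' h
  refine ⟨![x0, x1, x2, x3, x4], ?_, ?_⟩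
  · intro i j hij
    fin_cases i <;> fin_cases j <;> simp_all
  · have i0 := hr.1 x0
    have i1 := hr.1 x1
    have i2 := hr.1 x2
    have i3 := hr.1 x3
    have i4 := hr.1 x4
    have n10 := nrev a01
    have n21 := nrev a12
    have n32 := nrev a23
    have n43 := nrev a34
    have n04 := nrev a40
    have n20 := nrev a02
    have n31 := nrev a13
    have n42 := nrev a24
    have n03 := nrev a30
    have n14 := nrev a41
    intro v w
    fin_cases v <;> fin_cases w <;> simp [t512, Prod.ext_iff] <;> assumption

/-- In a tournament with a 3-cycle a→b→c→a and no copy of T_5^12: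
V_ab beats V_c, V_bc beats V_a, V_ac beats V_b, where
V_ab = {v : v→a, v→b, c→v}, V_c = {v : a→v, b→v, v→c},
V_bc = {v : a→v, v→b, v→c}, V_a = {v : v→a, b→v, c→v},
V_ac = {v : v→a, b→v, v→c}, V_b = {v : a→v, v→b, c→v}. -/
theorem stmt_11 {V : Type*} (r : V → V → Prop) (hr : IsTournament r)
    (a b c : V) (hab : r a b) (hbc : r b c) (hca : r c a)
    (hno : ¬ HasCopy r t512) :
    (∀ u, r u a ∧ r u b ∧ r c u → ∀ w, r a w ∧ r b w ∧ r w c → r u w) ∧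
    (∀ u, r a u ∧ r u b ∧ r u c → ∀ w, r w a ∧ r b w ∧ r c w → r u w) ∧
    (∀ u, r u a ∧ r b u ∧ r u c → ∀ w, r a w ∧ r w b ∧ r c w → r u w) := by
  have neq : ∀ {p q : V}, r p q → p ≠ q := fun h heq => hr.1 _ (heq ▸ h)
  have key : ∀ {p q s : V}, r p s → r s q → p ≠ q := by
    intro p q s hps hsq heq
    subst heq
    exact (hr.2 _ _ (neq hps)).mp hps hsq
  refine ⟨?_, ?_, ?_⟩
  · rintro u ⟨hua, hub, hcu⟩ w ⟨haw, hbw, hwc⟩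
    by_contra huw
    have hwu : r w u := (hr.2 w u (key hua haw).symm).mpr huw
    exact hno (mk_copy hr a b w c u hab hbw hwc hcu hua haw hbc hwu hca hub)
  · rintro u ⟨hau, hub, huc⟩ w ⟨hwa, hbw, hcw⟩
    by_contra huw
    have hwu : r w u := (hr.2 w u (key huc hcw).symm).mpr huw
    exact hno (mk_copy hr a u b c w hau hub hbc hcw hwa hab huc hbw hca hwu)
  · rintro u ⟨hua, hbu, huc⟩ w ⟨haw, hwb, hcw⟩
    by_contra huw
    have hwu : r w u := (hr.2 w u (key hua haw).symm).mpr huw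
    exact hno (mk_copy hr a w b u c haw hwb hbu huc hca hab hwu hbc hua hcw)
end
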